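/- arXiv:1808.00325 — 3 statements merged into one kernel-verified Lean document; each statement's English description precedes it below -/
import Mathlib

section
/- Main identity for the zero-range Dirichlet form: with Ω = {η ∈ ℤ_+^V : Σ_x η(x) = m} and Ω̂ = {ξ ∈ ℤ_+^V : Σ_x ξ(x) = m−1}, define for f,g : Ω → ℝ the Dirichlet form E_ZRP(f,g) = Σ_{η∈Ω} Σ_{x,y∈V} μ(η) r(x,η(x)) P(x,y) f(η)(g(η) − g(η+δ_y−δ_x)). Then E_ZRP(f,g) = Σ_{ξ∈Ω̂} μ(ξ) E_P(f_ξ, g_ξ), where f_ξ(x) := f(ξ+δ_x) and E_P(φ,ψ) := Σ_{x,y} π(x) P(x,y) φ(x)(ψ(x) − ψ(y)). -/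
open Finset

variable (V : Type*) [Fintype V] [DecidableEq V]

/-- Product-form (unnormalized) stationary weight of a configuration. -/
noncomputable def weight (π : V → ℝ) (r : V → ℕ → ℝ) (η : V → ℕ) : ℝ :=
  ∏ x, ∏ k ∈ Finset.Icc 1 (η x), π x / r x k

/-- Add one particle at site `x` : the configuration `η + δ_x`. -/
def addOne (η : V → ℕ) (x : V) : V → ℕ := Function.update η x (η x + 1)

/-- Move a particle from `x` to `y`: the configuration `η + δ_y - δ_x`. -/
def move (η : V → ℕ) (x y : V) : V → ℕ :=
  addOne V (Function.update η x (η x - 1)) y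

/-- The set of configurations of `m` particles on `V`. -/
def configs (m : ℕ) : Finset (V → ℕ) :=
  (Fintype.piFinset fun _ : V => Finset.range (m + 1)).filter fun η => ∑ x, η x = m

/-- Single-particle Dirichlet form `⟨φ, (I - P) ψ⟩_π`. -/
noncomputable def EP (π : V → ℝ) (P : V → V → ℝ) (φ ψ : V → ℝ) : ℝ :=
  ∑ x, ∑ y, π x * P x y * (φ x * (ψ x - ψ y))

/-- Zero-range Dirichlet form with jump matrix `P`, rates `r` and measure `μ`
on configurations with `m` particles. -/
noncomputable def EZRP (P : V → V → ℝ) (r : V → ℕ → ℝ) (μ : (V → ℕ) → ℝ) (m : ℕ)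
    (f g : (V → ℕ) → ℝ) : ℝ :=
  ∑ η ∈ configs V m, ∑ x, ∑ y,
    μ η * r x (η x) * P x y * (f η * (g η - g (move V η x y)))

/-- Mean of an observable on `m`-particle configurations under `μ`. -/
noncomputable def meanOn (m : ℕ) (μ : (V → ℕ) → ℝ) (f : (V → ℕ) → ℝ) : ℝ :=
  ∑ η ∈ configs V m, μ η * f η

/-- Variance of an observable on `m`-particle configurations under `μ`. -/
noncomputable def varOn (m : ℕ) (μ : (V → ℕ) → ℝ) (f : (V → ℕ) → ℝ) : ℝ :=
  meanOn V m μ (fun η => (f η) ^ 2) - (meanOn V m μ f) ^ 2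

/-- Variance of `φ : V → ℝ` under the probability vector `π`. -/
noncomputable def varPi (π : V → ℝ) (φ : V → ℝ) : ℝ :=
  ∑ x, π x * (φ x) ^ 2 - (∑ x, π x * φ x) ^ 2

lemma mem_configs_iff (m : ℕ) (η : V → ℕ) : η ∈ configs V m ↔ ∑ x, η x = m := by
  simp only [configs, mem_filter, Fintype.mem_piFinset, mem_range]
  constructor
  · rintro ⟨_, h⟩; exact h
  · intro h
    refine ⟨fun x => ?_, h⟩
    have := Finset.single_le_sum (f := η) (fun i _ => Nat.zero_le _) (mem_univ x)
    omega

lemma addOne_apply_self (ξ : V → ℕ) (x : V) : addOne V ξ x x = ξ x + 1 := by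
  simp [addOne]

lemma move_addOne (ξ : V → ℕ) (x y : V) : move V (addOne V ξ x) x y = addOne V ξ y := by
  unfold move addOne
  simp [Function.update_self, Function.update_idem]

lemma weight_addOne (π : V → ℝ) (r : V → ℕ → ℝ) (ξ : V → ℕ) (x : V) :
    weight V π r (addOne V ξ x) = weight V π r ξ * (π x / r x (ξ x + 1)) := by
  unfold weight
  rw [← Finset.mul_prod_erase _ _ (mem_univ x),
    ← Finset.mul_prod_erase (f := fun x' => ∏ k ∈ Icc 1 (ξ x'), π x' / r x' k) _ (mem_univ x),
    addOne_apply_self, Finset.prod_Icc_succ_top (by omega)]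
  have h : ∀ z ∈ univ.erase x,
      (∏ k ∈ Icc 1 (addOne V ξ x z), π z / r z k) = ∏ k ∈ Icc 1 (ξ z), π z / r z k := by
    intro z hz
    rw [show addOne V ξ x z = ξ z from Function.update_of_ne (mem_erase.1 hz).1 _ _]
  rw [Finset.prod_congr rfl h]; ring

lemma mu_addOne (π : V → ℝ) (r : V → ℕ → ℝ) (hr : ∀ x k, 1 ≤ k → 0 < r x k)
    (Z : ℝ) (hZ : 0 < Z) (μ : (V → ℕ) → ℝ) (hμ : ∀ η, μ η = weight V π r η / Z)
    (ξ : V → ℕ) (x : V) :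
    μ (addOne V ξ x) * r x (ξ x + 1) = μ ξ * π x := by
  have hrne : r x (ξ x + 1) ≠ 0 := (hr x _ (by omega)).ne'
  rw [hμ, hμ, weight_addOne]
  field_simp

lemma sum_configs_addOne (m : ℕ) (hm : 1 ≤ m) (x : V) (T : (V → ℕ) → ℝ)
    (h0 : ∀ η, η x = 0 → T η = 0) :
    ∑ η ∈ configs V m, T η = ∑ ξ ∈ configs V (m - 1), T (addOne V ξ x) := by
  rw [← Finset.sum_filter_of_ne (p := fun η => η x ≠ 0)
    (fun η _ h => by intro hx; exact h (h0 η hx))]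
  refine Finset.sum_nbij' (i := fun η => Function.update η x (η x - 1))
    (j := fun ξ => addOne V ξ x) ?_ ?_ ?_ ?_ ?_
  · intro η hη
    rw [mem_filter, mem_configs_iff] at hη
    rw [mem_configs_iff]
    rw [Finset.sum_update_of_mem (mem_univ x)]
    rw [← Finset.add_sum_erase _ η (mem_univ x), ← Finset.sdiff_singleton_eq_erase] at hη
    omega
  · intro ξ hξ
    rw [mem_configs_iff] at hξ
    rw [mem_filter, mem_configs_iff]
    unfold addOne
    rw [Finset.sum_update_of_mem (mem_univ x)]
    rw [← Finset.add_sum_erase _ ξ (mem_univ x), ← Finset.sdiff_singleton_eq_erase] at hξ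
    constructor
    · omega
    · simp [Function.update_self]
  · intro η hη
    rw [mem_filter, mem_configs_iff] at hη
    unfold addOne
    simp only [Function.update_self, Function.update_idem]
    have h1 : η x - 1 + 1 = η x := by omega
    rw [h1, Function.update_eq_self]
  · intro ξ _
    unfold addOne
    simp only [Function.update_self, Function.update_idem]
    simp
  · intro η hη
    rw [mem_filter] at hη
    congr 1
    unfold addOne
    simp only [Function.update_self, Function.update_idem]
    have h1 : η x - 1 + 1 = η x := by omega
    rw [h1, Function.update_eq_self]

/-- main identity for the zero-range Dirichlet form. -/
theorem zrp_dirichlet_main_identity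
    (m : ℕ) (hm : 1 ≤ m)
    (π : V → ℝ) (hπ : ∀ x, 0 < π x) (hπ1 : ∑ x, π x = 1)
    (P : V → V → ℝ) (hP0 : ∀ x y, 0 ≤ P x y) (hProw : ∀ x, ∑ y, P x y = 1)
    (hPirr : ∀ x y : V, ∃ k : ℕ, 0 < (Matrix.of P ^ k) x y)
    (hstat : ∀ y, ∑ x, π x * P x y = π y)
    (r : V → ℕ → ℝ) (hr : ∀ x k, 1 ≤ k → 0 < r x k) (hr0 : ∀ x, r x 0 = 0)
    (Z : ℝ) (hZ : 0 < Z)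
    (μ : (V → ℕ) → ℝ) (hμ : ∀ η, μ η = weight V π r η / Z)
    (f g : (V → ℕ) → ℝ) :
    EZRP V P r μ m f g
      = ∑ ξ ∈ configs V (m - 1),
          μ ξ * EP V π P (fun x => f (addOne V ξ x)) (fun x => g (addOne V ξ x)) := by
  unfold EZRP
  rw [Finset.sum_comm]
  have key : ∀ x, (∑ η ∈ configs V m, ∑ y,
        μ η * r x (η x) * P x y * (f η * (g η - g (move V η x y))))
      = ∑ ξ ∈ configs V (m - 1), ∑ y,
        μ ξ * π x * P x y *
          (f (addOne V ξ x) * (g (addOne V ξ x) - g (addOne V ξ y))) := by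
    intro x
    rw [sum_configs_addOne V m hm x _ (fun η hx => by simp [hx, hr0])]
    refine Finset.sum_congr rfl fun ξ hξ => Finset.sum_congr rfl fun y _ => ?_
    rw [move_addOne, addOne_apply_self]
    have h := mu_addOne V π r hr Z hZ μ hμ ξ x
    linear_combination (P x y * (f (addOne V ξ x) *
      (g (addOne V ξ x) - g (addOne V ξ y)))) * h
  rw [Finset.sum_congr rfl fun x _ => key x, Finset.sum_comm]
  refine Finset.sum_congr rfl fun ξ _ => ?_
  unfold EP
  rw [Finset.mul_sum]
  refine Finset.sum_congr rfl fun x _ => ?_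
  rw [Finset.mul_sum]
  refine Finset.sum_congr rfl fun y _ => ?_
  ring
end

section
/- Poincaré constant lower bound for uniformly increasing rates in the mean-field case is inherited: if λ(ZRP(Π,r,m)) ≥ c where c = inf_{x,k} (r(x,k+1) − r(x,k)), then for any stochastic matrix P with stationary law π, λ(ZRP(P,r,m)) ≥ λ(P) · c. -/
open Finset

variable (V : Type*) [Fintype V] [DecidableEq V]

set_option linter.unusedSectionVars false

lemma mem_configs {m : ℕ} {η : V → ℕ} : η ∈ configs V m ↔ ∑ x, η x = m := by
  constructor
  · intro h; exact (Finset.mem_filter.mp h).2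
  · intro h
    refine Finset.mem_filter.mpr ⟨?_, h⟩
    refine Fintype.mem_piFinset.mpr fun x => ?_
    rw [Finset.mem_range, Nat.lt_succ_iff, ← h]
    exact Finset.single_le_sum (f := η) (fun i _ => Nat.zero_le _) (Finset.mem_univ x)

lemma weight_pos (π : V → ℝ) (hπ : ∀ x, 0 < π x) (r : V → ℕ → ℝ)
    (hr : ∀ x k, 1 ≤ k → 0 < r x k) (ξ : V → ℕ) : 0 < weight V π r ξ :=
  Finset.prod_pos fun x _ => Finset.prod_pos fun k hk =>
    div_pos (hπ x) (hr x k (Finset.mem_Icc.mp hk).1)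

lemma sum_configs_succ (m : ℕ) (x : V) (F : (V → ℕ) → ℝ) (hF : ∀ η, η x = 0 → F η = 0) :
    ∑ η ∈ configs V (m + 1), F η = ∑ ξ ∈ configs V m, F (addOne V ξ x) := by
  rw [← Finset.sum_filter_of_ne (p := fun η => η x ≠ 0)
    (fun η _ hne h0 => hne (hF η h0))]
  have linv : ∀ η ∈ (configs V (m+1)).filter (fun η => η x ≠ 0),
      addOne V (Function.update η x (η x - 1)) x = η := by
    intro η hη
    have hx : η x ≠ 0 := (Finset.mem_filter.mp hη).2
    show Function.update (Function.update η x (η x - 1)) x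
      (Function.update η x (η x - 1) x + 1) = η
    rw [Function.update_self, Function.update_idem,
        Nat.sub_add_cancel (Nat.one_le_iff_ne_zero.mpr hx), Function.update_eq_self]
  refine Finset.sum_nbij' (fun η => Function.update η x (η x - 1))
    (fun ξ => addOne V ξ x) ?_ ?_ linv ?_ ?_
  · intro η hη
    obtain ⟨hη1, hx⟩ := Finset.mem_filter.mp hη
    rw [mem_configs] at hη1 ⊢
    rw [Finset.sum_update_of_mem (Finset.mem_univ x), Finset.sdiff_singleton_eq_erase]
    have h := Finset.add_sum_erase Finset.univ η (Finset.mem_univ x)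
    omega
  · intro ξ hξ
    rw [mem_configs] at hξ
    refine Finset.mem_filter.mpr ⟨?_, ?_⟩
    · rw [mem_configs]
      show ∑ z, Function.update ξ x (ξ x + 1) z = m + 1
      rw [Finset.sum_update_of_mem (Finset.mem_univ x), Finset.sdiff_singleton_eq_erase]
      have h := Finset.add_sum_erase Finset.univ ξ (Finset.mem_univ x)
      omega
    · show Function.update ξ x (ξ x + 1) x ≠ 0
      rw [Function.update_self]
      omega
  · intro ξ hξ
    show Function.update (Function.update ξ x (ξ x + 1)) x
      (Function.update ξ x (ξ x + 1) x - 1) = ξ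
    rw [Function.update_self, Function.update_idem]
    simp
  · intro η hη
    rw [linv η hη]

lemma EZRP_decompose (m : ℕ) (π : V → ℝ) (r : V → ℕ → ℝ)
    (hr : ∀ x k, 1 ≤ k → 0 < r x k) (hr0 : ∀ x, r x 0 = 0)
    (Q : V → V → ℝ) (μ : (V → ℕ) → ℝ)
    (hμ : ∀ η, μ η = weight V π r η / ∑ ξ ∈ configs V (m+1), weight V π r ξ)
    (f : (V → ℕ) → ℝ) :
    EZRP V Q r μ (m+1) f f =
      (∑ ξ ∈ configs V m, weight V π r ξ *
        ∑ x, ∑ y, π x * Q x y *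
          (f (addOne V ξ x) * (f (addOne V ξ x) - f (addOne V ξ y)))) /
      (∑ η ∈ configs V (m+1), weight V π r η) := by
  have hx : ∀ x : V,
      (∑ η ∈ configs V (m+1), ∑ y, μ η * r x (η x) * Q x y * (f η * (f η - f (move V η x y))))
      = ∑ ξ ∈ configs V m, ∑ y, (weight V π r ξ * (π x * Q x y *
          (f (addOne V ξ x) * (f (addOne V ξ x) - f (addOne V ξ y))))) /
          (∑ η ∈ configs V (m+1), weight V π r η) := by
    intro x
    rw [sum_configs_succ V m x _ (fun η h0 => by simp [h0, hr0])]
    refine Finset.sum_congr rfl fun ξ hξ => Finset.sum_congr rfl fun y _ => ?_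
    have h1 : (addOne V ξ x) x = ξ x + 1 := Function.update_self ..
    rw [h1, move_addOne, hμ, weight_addOne]
    have hne : r x (ξ x + 1) ≠ 0 := (hr x (ξ x + 1) (Nat.le_add_left 1 _)).ne'
    rw [div_mul_eq_mul_div, div_mul_eq_mul_div, div_mul_eq_mul_div]
    congr 1
    field_simp
  calc EZRP V Q r μ (m+1) f f
      = ∑ x, ∑ η ∈ configs V (m+1), ∑ y,
          μ η * r x (η x) * Q x y * (f η * (f η - f (move V η x y))) := by
        rw [EZRP]; exact Finset.sum_comm
    _ = ∑ x, ∑ ξ ∈ configs V m, ∑ y, (weight V π r ξ * (π x * Q x y *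
          (f (addOne V ξ x) * (f (addOne V ξ x) - f (addOne V ξ y))))) /
          (∑ η ∈ configs V (m+1), weight V π r η) :=
        Finset.sum_congr rfl fun x _ => hx x
    _ = _ := by
        rw [Finset.sum_comm]
        simp only [Finset.mul_sum, Finset.sum_div]

lemma sum_pi_pi (π : V → ℝ) (hπ1 : ∑ x, π x = 1) (g : V → ℝ) :
    ∑ x, ∑ y, π x * π y * (g x * (g x - g y)) = varPi V π g := by
  have h1 : ∑ x, ∑ y, π x * π y * (g x * (g x - g y))
      = (∑ x, π x * g x ^ 2) * (∑ y, π y) - (∑ x, π x * g x) * (∑ y, π y * g y) := by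
    rw [Finset.sum_mul, Finset.sum_mul, ← Finset.sum_sub_distrib]
    refine Finset.sum_congr rfl fun x _ => ?_
    rw [Finset.mul_sum, Finset.mul_sum, ← Finset.sum_sub_distrib]
    exact Finset.sum_congr rfl fun y _ => by ring
  rw [h1, hπ1, varPi]
  ring

lemma varPi_nonneg (π : V → ℝ) (hπ : ∀ x, 0 ≤ π x) (hπ1 : ∑ x, π x = 1) (φ : V → ℝ) :
    0 ≤ varPi V π φ := by
  have h : ∀ x ∈ (Finset.univ : Finset V), π x * (φ x - ∑ y, π y * φ y) ^ 2
      = π x * φ x ^ 2 - 2 * (∑ y, π y * φ y) * (π x * φ x) + (∑ y, π y * φ y) ^ 2 * π x :=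
    fun x _ => by ring
  have key : varPi V π φ = ∑ x, π x * (φ x - ∑ y, π y * φ y) ^ 2 := by
    rw [Finset.sum_congr rfl h, Finset.sum_add_distrib, Finset.sum_sub_distrib,
        ← Finset.mul_sum, ← Finset.mul_sum, hπ1, varPi]
    ring
  rw [key]
  exact Finset.sum_nonneg fun x _ => mul_nonneg (hπ x) (sq_nonneg _)

lemma EP_nonneg (π : V → ℝ) (hπ : ∀ x, 0 ≤ π x)
    (P : V → V → ℝ) (hP0 : ∀ x y, 0 ≤ P x y) (hProw : ∀ x, ∑ y, P x y = 1)
    (hstat : ∀ y, ∑ x, π x * P x y = π y) (φ : V → ℝ) :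
    0 ≤ EP V π P φ φ := by
  have hA : ∑ x, ∑ y, π x * P x y * φ x ^ 2 = ∑ x, π x * φ x ^ 2 := by
    refine Finset.sum_congr rfl fun x _ => ?_
    calc ∑ y, π x * P x y * φ x ^ 2 = (π x * φ x ^ 2) * ∑ y, P x y := by
          rw [Finset.mul_sum]; exact Finset.sum_congr rfl fun y _ => by ring
      _ = π x * φ x ^ 2 := by rw [hProw, mul_one]
  have hB : ∑ x, ∑ y, π x * P x y * φ y ^ 2 = ∑ x, π x * φ x ^ 2 := by
    rw [Finset.sum_comm]
    refine Finset.sum_congr rfl fun y _ => ?_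
    calc ∑ x, π x * P x y * φ y ^ 2 = (∑ x, π x * P x y) * φ y ^ 2 := by
          rw [Finset.sum_mul]
      _ = π y * φ y ^ 2 := by rw [hstat]
  have h2 : (2:ℝ) * EP V π P φ φ = (∑ x, ∑ y, π x * P x y * (φ x - φ y) ^ 2)
      + ((∑ x, ∑ y, π x * P x y * φ x ^ 2) - (∑ x, ∑ y, π x * P x y * φ y ^ 2)) := by
    rw [EP, Finset.mul_sum, ← Finset.sum_sub_distrib, ← Finset.sum_add_distrib]
    refine Finset.sum_congr rfl fun x _ => ?_
    rw [Finset.mul_sum, ← Finset.sum_sub_distrib, ← Finset.sum_add_distrib]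
    exact Finset.sum_congr rfl fun y _ => by ring
  have hS : 0 ≤ ∑ x, ∑ y, π x * P x y * (φ x - φ y) ^ 2 :=
    Finset.sum_nonneg fun x _ => Finset.sum_nonneg fun y _ =>
      mul_nonneg (mul_nonneg (hπ x) (hP0 x y)) (sq_nonneg _)
  linarith

/-- transfer of the mean-field lower bound for uniformly increasing rates. -/
theorem zrp_uniformly_increasing_rates
    (m : ℕ) (hm : 1 ≤ m)
    (π : V → ℝ) (hπ : ∀ x, 0 < π x) (hπ1 : ∑ x, π x = 1)
    (P : V → V → ℝ) (hP0 : ∀ x y, 0 ≤ P x y) (hProw : ∀ x, ∑ y, P x y = 1)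
    (hstat : ∀ y, ∑ x, π x * P x y = π y)
    (r : V → ℕ → ℝ) (hr : ∀ x k, 1 ≤ k → 0 < r x k) (hr0 : ∀ x, r x 0 = 0)
    (μ : (V → ℕ) → ℝ)
    (hμ : ∀ η, μ η = weight V π r η / ∑ ξ ∈ configs V m, weight V π r ξ)
    (c : ℝ) (hc : ∀ (x : V) (k : ℕ), c ≤ r x (k + 1) - r x k)
    (hMF : ∀ f : (V → ℕ) → ℝ,
      c * varOn V m μ f ≤ EZRP V (fun _ y => π y) r μ m f f)
    (lamP : ℝ)
    (hlam1 : ∀ φ : V → ℝ, lamP * varPi V π φ ≤ EP V π P φ φ)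
    (hlam2 : ∃ φ : V → ℝ, varPi V π φ ≠ 0 ∧ EP V π P φ φ = lamP * varPi V π φ) :
    ∀ f : (V → ℕ) → ℝ, lamP * c * varOn V m μ f ≤ EZRP V P r μ m f f := by
  intro f
  obtain ⟨φ₀, hvar0, heq0⟩ := hlam2
  have hVne : Nonempty V := by
    by_contra h
    rw [not_nonempty_iff] at h
    exact hvar0 (by simp [varPi, Finset.univ_eq_empty])
  obtain ⟨x₀⟩ := hVne
  obtain ⟨n, rfl⟩ : ∃ n, m = n + 1 := ⟨m - 1, by omega⟩
  have hZpos : 0 < ∑ η ∈ configs V (n+1), weight V π r η := by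
    refine Finset.sum_pos (fun η _ => weight_pos V π hπ r hr η) ?_
    refine ⟨fun z => if z = x₀ then n + 1 else 0, ?_⟩
    rw [mem_configs]
    simp
  have hvpos : 0 < varPi V π φ₀ :=
    lt_of_le_of_ne (varPi_nonneg V π (fun x => (hπ x).le) hπ1 φ₀) (Ne.symm hvar0)
  have hEPnn : 0 ≤ EP V π P φ₀ φ₀ :=
    EP_nonneg V π (fun x => (hπ x).le) P hP0 hProw hstat φ₀
  have hlamnn : 0 ≤ lamP := by
    have h0 : 0 ≤ lamP * varPi V π φ₀ := by rw [← heq0]; exact hEPnn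
    by_contra h
    push_neg at h
    nlinarith
  have hdP := EZRP_decompose V n π r hr hr0 P μ hμ f
  have hdPi := EZRP_decompose V n π r hr hr0 (fun _ y => π y) μ hμ f
  beta_reduce at hdPi
  have step2 : lamP * EZRP V (fun _ y => π y) r μ (n+1) f f ≤ EZRP V P r μ (n+1) f f := by
    rw [hdP, hdPi, ← mul_div_assoc, Finset.mul_sum]
    rw [div_le_div_iff_of_pos_right hZpos]
    refine Finset.sum_le_sum fun ξ hξ => ?_
    have hw := (weight_pos V π hπ r hr ξ).le
    have hg := hlam1 (fun z => f (addOne V ξ z))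
    rw [EP, ← sum_pi_pi V π hπ1 (fun z => f (addOne V ξ z))] at hg
    beta_reduce at hg
    calc lamP * (weight V π r ξ *
          ∑ x, ∑ y, π x * π y * (f (addOne V ξ x) * (f (addOne V ξ x) - f (addOne V ξ y))))
        = weight V π r ξ * (lamP *
          ∑ x, ∑ y, π x * π y * (f (addOne V ξ x) * (f (addOne V ξ x) - f (addOne V ξ y)))) := by
          ring
      _ ≤ weight V π r ξ *
          ∑ x, ∑ y, π x * P x y * (f (addOne V ξ x) * (f (addOne V ξ x) - f (addOne V ξ y))) :=
          mul_le_mul_of_nonneg_left hg hw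
  have step1 := hMF f
  calc lamP * c * varOn V (n+1) μ f = lamP * (c * varOn V (n+1) μ f) := by ring
    _ ≤ lamP * EZRP V (fun _ y => π y) r μ (n+1) f f := mul_le_mul_of_nonneg_left step1 hlamnn
    _ ≤ EZRP V P r μ (n+1) f f := step2
end

section
/- Descending factorial moment: with ζ as above, E[(m−ζ)(m−ζ−1)] = ((n−1)/(n+1)) m(m−1). -/
/-!
Given the occupation of `x₀`, the remaining `j = m - ζ` particles are spread over the other
`n - 1` sites in `multichoose (n - 1) j` ways. The absorption identity
`j (j - 1) · multichoose a j = a (a + 1) · multichoose (a + 2) (j - 2)` and the hockey-stick sum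
of multichoose numbers then give
`(n + 1) · ∑ η, (m - η x₀) (m - η x₀ - 1) = (n - 1) · m (m - 1) · #configs`.
-/

open Finset

variable (V : Type*) [Fintype V] [DecidableEq V]

namespace Nat

theorem succ_mul_multichoose_succ (a k : ℕ) :
    (k + 1) * multichoose a (k + 1) = a * multichoose (a + 1) k := by
  rw [multichoose_eq, multichoose_eq, mul_comm, choose_succ_right_eq,
    show a + (k + 1) - 1 = a + k by omega, show a + 1 + k - 1 = a + k by omega, Nat.add_sub_cancel,
    mul_comm]

theorem multichoose_add_mul_descFactorial (a j r : ℕ) :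
    multichoose a (j + r) * (j + r).descFactorial r = a.ascFactorial r * multichoose (a + r) j := by
  induction r generalizing a with
  | zero => simp
  | succ r ih =>
    calc multichoose a (j + r + 1) * (j + r + 1).descFactorial (r + 1)
        = (j + r + 1) * multichoose a (j + r + 1) * (j + r).descFactorial r := by
          rw [succ_descFactorial_succ]; ring
      _ = a * (multichoose (a + 1) (j + r) * (j + r).descFactorial r) := by
          rw [succ_mul_multichoose_succ]; ring
      _ = a.ascFactorial (r + 1) * multichoose (a + (r + 1)) j := by
          rw [ih, ← mul_assoc, succ_ascFactorial, ascFactorial_succ, add_right_comm a 1 r, add_assoc]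

theorem sum_range_multichoose_eq (b N : ℕ) :
    ∑ i ∈ range (N + 1), multichoose b i = multichoose (b + 1) N := by
  induction N with
  | zero => simp
  | succ N ih => rw [sum_range_succ, ih, multichoose_succ_succ b N, add_comm]

theorem sum_range_descFactorial_mul_multichoose (a r m : ℕ) :
    (a + r) * ∑ j ∈ range (m + 1), j.descFactorial r * multichoose a j
      = a * (m.descFactorial r * multichoose (a + 1) m) := by
  obtain hm | ⟨k, rfl⟩ : m < r ∨ ∃ k, m = k + r :=
    (lt_or_ge m r).imp_right fun h ↦ ⟨m - r, by omega⟩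
  · rw [sum_eq_zero fun j hj ↦ by rw [descFactorial_of_lt (by grind), zero_mul],
      descFactorial_of_lt hm]
    simp
  · have hsplit : ∑ j ∈ range (k + r + 1), j.descFactorial r * multichoose a j
        = a.ascFactorial r * multichoose (a + r + 1) k := by
      rw [show k + r + 1 = r + (k + 1) by omega, sum_range_add, ← sum_range_multichoose_eq,
        mul_sum, sum_eq_zero fun j hj ↦ by rw [descFactorial_of_lt (mem_range.mp hj), zero_mul],
        zero_add]
      refine sum_congr rfl fun i _ ↦ ?_
      rw [add_comm r i, mul_comm, multichoose_add_mul_descFactorial]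
    rw [hsplit, mul_comm (descFactorial _ _), multichoose_add_mul_descFactorial, ← mul_assoc,
      ← mul_assoc, succ_ascFactorial, add_right_comm a 1 r]

end Nat

namespace Finset

variable {ι : Type*} [DecidableEq ι]

theorem card_piAntidiag_nat (s : Finset ι) (n : ℕ) : #(piAntidiag s n) = (#s).multichoose n := by
  rw [← card_finsuppAntidiag_nat_eq_multichoose, finsuppAntidiag, card_map, card_attach]

theorem sum_piAntidiag_cons_apply {M : Type*} [AddCommMonoid M] {i : ι} {s : Finset ι}
    (hi : i ∉ s) (n : ℕ) (g : ℕ → M) :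
    ∑ f ∈ piAntidiag (cons i s hi) n, g (f i)
      = ∑ p ∈ antidiagonal n, #(piAntidiag s p.2) • g p.1 := by
  rw [piAntidiag_cons hi, sum_disjiUnion]
  refine sum_congr rfl fun p _ ↦ ?_
  rw [sum_map, ← sum_const]
  refine sum_congr rfl fun f hf ↦ ?_
  have hfi : f i = 0 := by_contra fun h ↦ hi ((mem_piAntidiag.mp hf).2 i h)
  simp [hfi]

end Finset

theorem configs_eq_piAntidiag (m : ℕ) : configs V m = piAntidiag univ m := by
  ext η
  simp only [configs, mem_filter, Fintype.mem_piFinset, mem_range, mem_piAntidiag, mem_univ,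
    implies_true, and_true, and_iff_right_iff_imp]
  intro hη x
  exact Nat.lt_succ_of_le (hη ▸ single_le_sum (fun x _ ↦ Nat.zero_le (η x)) (mem_univ x))

theorem card_configs (m : ℕ) : #(configs V m) = (Fintype.card V).multichoose m := by
  rw [configs_eq_piAntidiag, card_piAntidiag_nat, card_univ]

theorem sum_configs_sub_apply {M : Type*} [AddCommMonoid M] (m : ℕ) (i : V) (g : ℕ → M) :
    ∑ η ∈ configs V m, g (m - η i)
      = ∑ j ∈ range (m + 1), (Fintype.card V - 1).multichoose j • g j := by
  have hi : i ∉ univ.erase i := notMem_erase i univ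
  have hsplit : univ = cons i (univ.erase i) hi := by rw [cons_eq_insert, insert_erase (mem_univ i)]
  rw [configs_eq_piAntidiag, hsplit, sum_piAntidiag_cons_apply hi m fun k ↦ g (m - k),
    Nat.antidiagonal_eq_map', sum_map]
  refine sum_congr rfl fun j hj ↦ ?_
  change #(piAntidiag _ j) • g (m - (m - j)) = _
  rw [card_piAntidiag_nat, card_erase_of_mem (mem_univ i), card_univ,
    Nat.sub_sub_self (mem_range_succ_iff.mp hj)]

theorem sum_configs_descFactorial_sub_apply (m r : ℕ) (i : V) :
    (Fintype.card V - 1 + r) * ∑ η ∈ configs V m, (m - η i).descFactorial r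
      = (Fintype.card V - 1) * (m.descFactorial r * #(configs V m)) := by
  obtain ⟨a, ha⟩ : ∃ a, Fintype.card V = a + 1 :=
    Nat.exists_eq_add_one.mpr (Fintype.card_pos_iff.mpr ⟨i⟩)
  rw [card_configs, ha, Nat.add_sub_cancel, sum_configs_sub_apply V m i fun j ↦ j.descFactorial r,
    ← Nat.sum_range_descFactorial_mul_multichoose, ha, Nat.add_sub_cancel]
  simp only [smul_eq_mul, mul_comm]

theorem uniform_occupation_factorial_moment_general (n m : ℕ)
    (x₀ : Fin n) :
    meanOn (Fin n) m (fun _ => ((configs (Fin n) m).card : ℝ)⁻¹)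
        (fun η => ((m : ℝ) - (η x₀ : ℝ)) * ((m : ℝ) - (η x₀ : ℝ) - 1))
      = ((n : ℝ) - 1) / ((n : ℝ) + 1) * (m : ℝ) * ((m : ℝ) - 1) := by
  obtain ⟨a, rfl⟩ : ∃ a, n = a + 1 := Nat.exists_eq_add_one.mpr x₀.pos
  have hterm : ∀ η ∈ configs (Fin (a + 1)) m, ((m : ℝ) - η x₀) * ((m : ℝ) - η x₀ - 1)
      = (((m - η x₀).descFactorial 2 : ℕ) : ℝ) := fun η hη ↦ by
    have hle : η x₀ ≤ m :=
      Nat.lt_succ_iff.mp (mem_range.mp (Fintype.mem_piFinset.mp (mem_filter.mp hη).1 x₀))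
    rw [Nat.cast_descFactorial_two, Nat.cast_sub hle]
  have hcard : (#(configs (Fin (a + 1)) m) : ℝ) ≠ 0 := by
    rw [card_configs, Fintype.card_fin, Nat.multichoose_eq]
    exact_mod_cast (Nat.choose_pos (by omega)).ne'
  have hmoment :=
    congrArg (Nat.cast : ℕ → ℝ) (sum_configs_descFactorial_sub_apply (Fin (a + 1)) m 2 x₀)
  rw [meanOn, ← mul_sum, sum_congr rfl hterm, ← Nat.cast_sum]
  push_cast [Nat.cast_descFactorial_two, Fintype.card_fin] at hmoment ⊢
  field_simp
  linear_combination hmoment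

/-- descending factorial moment
E[(m-ζ)(m-ζ-1)] = ((n-1)/(n+1)) m(m-1). -/
theorem uniform_occupation_factorial_moment (n m : ℕ) (hn : 2 ≤ n) (hm : 1 ≤ m)
    (x₀ : Fin n) :
    meanOn (Fin n) m (fun _ => ((configs (Fin n) m).card : ℝ)⁻¹)
        (fun η => ((m : ℝ) - (η x₀ : ℝ)) * ((m : ℝ) - (η x₀ : ℝ) - 1))
      = ((n : ℝ) - 1) / ((n : ℝ) + 1) * (m : ℝ) * ((m : ℝ) - 1) :=
  uniform_occupation_factorial_moment_general n m x₀
end
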